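/- rPCTL* is as expressive as PCTL*(◊,□): (i) for every PCTL*(◊,□) state formula φ there exists an rPCTL* state formula φ' such that for all DTMCs M and states s, M,s ⊨ φ iff V_M(s, φ') = 1111; and (ii) for every rPCTL* state formula φ and every truth value t ∈ B4 there exists a PCTL*(◊,□) state formula φ_t such that for all DTMCs M and states s, V_M(s, φ) ⪰ t iff M,s ⊨ φ_t. -/
import Mathlib


open MeasureTheory
open scoped Classical ENNReal NNReal

/-! ### Discrete-time Markov chains, paths, cylinder sets -/

/-- A discrete-time Markov chain over atomic propositions `AP` with a finite
state set `S`, an initial state, a stochastic transition function with values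
in `[0,1]`, and a labeling function. -/
structure DTMC (AP : Type) (S : Type) [Fintype S] where
  init : S
  trans : S → S → ℝ≥0
  trans_le_one : ∀ s s', trans s s' ≤ 1
  trans_sum_one : ∀ s, ∑ s', trans s s' = 1
  label : S → Set AP

namespace DTMC

variable {AP S : Type} [Fintype S]

/-- Paths of `M` starting in `s`. -/
def Path (M : DTMC AP S) (s : S) : Type :=
  { π : ℕ → S // π 0 = s ∧ ∀ n, 0 < M.trans (π n) (π (n + 1)) }

/-- Paths of `M` (with arbitrary first state). -/
def PathU (M : DTMC AP S) : Type :=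
  { π : ℕ → S // ∀ n, 0 < M.trans (π n) (π (n + 1)) }

/-- Forget the start state of a path. -/
def Path.toU {M : DTMC AP S} {s : S} (π : M.Path s) : M.PathU :=
  ⟨π.1, π.2.2⟩

/-- The suffix `π[n..]` of a path. -/
def PathU.suffix {M : DTMC AP S} (π : M.PathU) (n : ℕ) : M.PathU :=
  ⟨fun i => π.1 (n + i), fun i => π.2 (n + i)⟩

/-- `ρ 0, …, ρ n` is a path prefix of `M` starting in `s`. -/
def IsPrefix (M : DTMC AP S) (s : S) (ρ : ℕ → S) (n : ℕ) : Prop :=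
  ρ 0 = s ∧ ∀ i < n, 0 < M.trans (ρ i) (ρ (i + 1))

/-- The cylinder set of the prefix `ρ 0, …, ρ n`: all paths starting in `s`
that extend this prefix. -/
def Cyl (M : DTMC AP S) (s : S) (ρ : ℕ → S) (n : ℕ) : Set (M.Path s) :=
  { π | ∀ i ≤ n, π.1 i = ρ i }

/-- The σ-algebra on `Paths(M,s)` generated by the cylinder sets. -/
instance instMeasurableSpacePath (M : DTMC AP S) (s : S) : MeasurableSpace (M.Path s) :=
  .generateFrom { A | ∃ ρ n, M.IsPrefix s ρ n ∧ A = M.Cyl s ρ n }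

/-- `μ` is a probability measure on `Paths(M,s)` giving each cylinder set the
product of the transition probabilities along its prefix. -/
def IsCylinderMeasure (M : DTMC AP S) (s : S) (μ : Measure (M.Path s)) : Prop :=
  IsProbabilityMeasure μ ∧
    ∀ ρ n, M.IsPrefix s ρ n →
      μ (M.Cyl s ρ n) = ∏ j ∈ Finset.range n, (M.trans (ρ j) (ρ (j + 1)) : ℝ≥0∞)

/-- Paths staying in `S'` forever. -/
def Safe (M : DTMC AP S) (s : S) (S' : Set S) : Set (M.Path s) :=
  { π | ∀ n, π.1 n ∈ S' }

/-- Paths staying in `S'` from some point on (all but finitely many positions). -/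
def CoBuchi (M : DTMC AP S) (s : S) (S' : Set S) : Set (M.Path s) :=
  { π | ∃ m, ∀ n, m ≤ n → π.1 n ∈ S' }

/-- Paths visiting `S'` infinitely often. -/
def Buchi (M : DTMC AP S) (s : S) (S' : Set S) : Set (M.Path s) :=
  { π | ∀ m, ∃ n, m ≤ n ∧ π.1 n ∈ S' }

/-- Paths visiting `S'` at least once. -/
def Reach (M : DTMC AP S) (s : S) (S' : Set S) : Set (M.Path s) :=
  { π | ∃ n, π.1 n ∈ S' }

end DTMC

/-! ### Truth values -/

/-- Four-bit truth values `b₁b₂b₃b₄`. -/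
structure TV where
  b1 : Bool
  b2 : Bool
  b3 : Bool
  b4 : Bool
deriving DecidableEq

namespace TV

/-- The truth value `1111`. -/
def top : TV := ⟨true, true, true, true⟩

/-- The truth value `0000`. -/
def bot : TV := ⟨false, false, false, false⟩

instance : LE TV := ⟨fun v w => v.b1 ≤ w.b1 ∧ v.b2 ≤ w.b2 ∧ v.b3 ≤ w.b3 ∧ v.b4 ≤ w.b4⟩

instance : LT TV := ⟨fun v w => v ≤ w ∧ ¬w ≤ v⟩

/-- Minimum (bitwise). -/
def inf (v w : TV) : TV := ⟨v.b1 && w.b1, v.b2 && w.b2, v.b3 && w.b3, v.b4 && w.b4⟩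

/-- Maximum (bitwise). -/
def sup (v w : TV) : TV := ⟨v.b1 || w.b1, v.b2 || w.b2, v.b3 || w.b3, v.b4 || w.b4⟩

/-- `v` lies in `B4`, i.e. its bits are monotonically nondecreasing. -/
def InB4 (v : TV) : Prop := v.b1 ≤ v.b2 ∧ v.b2 ≤ v.b3 ∧ v.b3 ≤ v.b4

end TV

/-- The five truth values `1111 ≻ 0111 ≻ 0011 ≻ 0001 ≻ 0000`. -/
inductive B4 : Type
  | t1111 | t0111 | t0011 | t0001 | t0000
deriving DecidableEq

/-- The bit vector of an element of `B4`. -/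
def B4.toTV : B4 → TV
  | .t1111 => ⟨true, true, true, true⟩
  | .t0111 => ⟨false, true, true, true⟩
  | .t0011 => ⟨false, false, true, true⟩
  | .t0001 => ⟨false, false, false, true⟩
  | .t0000 => ⟨false, false, false, false⟩

/-- `v ⪰ t` for a truth value `v` and `t ∈ B4`: if `t` has `k` leading zeros,
then `v ⪰ t` is determined by bit `k+1` of `v`. -/
def TV.ge4 (v : TV) : B4 → Prop
  | .t1111 => v.b1 = true
  | .t0111 => v.b2 = true
  | .t0011 => v.b3 = true
  | .t0001 => v.b4 = true
  | .t0000 => True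

/-- The Boolean truth value of a proposition. -/
noncomputable def boolOf (P : Prop) : Bool := @decide P (Classical.propDecidable P)

/-- Comparison operators `∼ ∈ {<, ≤, =, ≥, >}` for probability thresholds. -/
inductive PCmp : Type
  | lt | le | eq | ge | gt

/-- `PCmp.holds c a b` expresses `a ∼ b`. -/
def PCmp.holds : PCmp → ℝ≥0∞ → ℝ≥0∞ → Prop
  | .lt, a, b => a < b
  | .le, a, b => a ≤ b
  | .eq, a, b => a = b
  | .ge, a, b => b ≤ a
  | .gt, a, b => b < a

/-- Rational probability thresholds `λ ∈ [0,1] ∩ ℚ`. -/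
abbrev QProb : Type := Set.Icc (0 : ℚ) 1

/-- The threshold as an extended nonnegative real. -/
noncomputable def QProb.toENNReal (q : QProb) : ℝ≥0∞ := ENNReal.ofReal ((q : ℚ) : ℝ)

/-! ### PCTL*(◊,□) and rPCTL*: shared syntax and semantics -/

mutual
/-- State formulas of PCTL*(◊,□) (equivalently, of rPCTL*):
`φ ::= p | ¬φ | φ∧φ | φ∨φ | φ→φ | P_{∼λ}[Φ]`. -/
inductive SF (AP : Type) : Type
  | atom : AP → SF AP
  | not : SF AP → SF AP
  | and : SF AP → SF AP → SF AP
  | or : SF AP → SF AP → SF AP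
  | imp : SF AP → SF AP → SF AP
  | prob : PCmp → QProb → PFm AP → SF AP

/-- Path formulas of PCTL*(◊,□) (equivalently, of rPCTL*, whose temporal
operators are written with dots): `Φ ::= φ | ¬Φ | Φ∧Φ | Φ∨Φ | Φ→Φ | X Φ | ◊ Φ | □ Φ`. -/
inductive PFm (AP : Type) : Type
  | state : SF AP → PFm AP
  | not : PFm AP → PFm AP
  | and : PFm AP → PFm AP → PFm AP
  | or : PFm AP → PFm AP → PFm AP
  | imp : PFm AP → PFm AP → PFm AP
  | next : PFm AP → PFm AP
  | ev : PFm AP → PFm AP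
  | alw : PFm AP → PFm AP
end

mutual
/-- `φ` contains no implications. -/
def SF.NoImp {AP : Type} : SF AP → Prop
  | .atom _ => True
  | .not φ => φ.NoImp
  | .and φ ψ => φ.NoImp ∧ ψ.NoImp
  | .or φ ψ => φ.NoImp ∧ ψ.NoImp
  | .imp _ _ => False
  | .prob _ _ Φ => Φ.NoImp

/-- `Φ` contains no implications. -/
def PFm.NoImp {AP : Type} : PFm AP → Prop
  | .state φ => φ.NoImp
  | .not Φ => Φ.NoImp
  | .and Φ Ψ => Φ.NoImp ∧ Ψ.NoImp
  | .or Φ Ψ => Φ.NoImp ∧ Ψ.NoImp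
  | .imp _ _ => False
  | .next Φ => Φ.NoImp
  | .ev Φ => Φ.NoImp
  | .alw Φ => Φ.NoImp
end

mutual
/-- The standard PCTL* semantics `M,s ⊨ φ` for state formulas, relative to the
family of cylinder-set measures `μ s`. -/
def SF.Sat {AP S : Type} [Fintype S] (M : DTMC AP S)
    (μ : ∀ s : S, MeasureTheory.Measure (M.Path s)) : SF AP → S → Prop
  | .atom p, s => p ∈ M.label s
  | .not φ, s => ¬ SF.Sat M μ φ s
  | .and φ ψ, s => SF.Sat M μ φ s ∧ SF.Sat M μ ψ s
  | .or φ ψ, s => SF.Sat M μ φ s ∨ SF.Sat M μ ψ s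
  | .imp φ ψ, s => SF.Sat M μ φ s → SF.Sat M μ ψ s
  | .prob c l Φ, s => c.holds (μ s { π | PFm.Sat M μ Φ π.toU }) l.toENNReal

/-- The standard PCTL* (i.e. LTL) semantics `M,π ⊨ Φ` for path formulas. -/
def PFm.Sat {AP S : Type} [Fintype S] (M : DTMC AP S)
    (μ : ∀ s : S, MeasureTheory.Measure (M.Path s)) : PFm AP → M.PathU → Prop
  | .state φ, π => SF.Sat M μ φ (π.1 0)
  | .not Φ, π => ¬ PFm.Sat M μ Φ π
  | .and Φ Ψ, π => PFm.Sat M μ Φ π ∧ PFm.Sat M μ Ψ π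
  | .or Φ Ψ, π => PFm.Sat M μ Φ π ∨ PFm.Sat M μ Ψ π
  | .imp Φ Ψ, π => PFm.Sat M μ Φ π → PFm.Sat M μ Ψ π
  | .next Φ, π => PFm.Sat M μ Φ (π.suffix 1)
  | .ev Φ, π => ∃ n, PFm.Sat M μ Φ (π.suffix n)
  | .alw Φ, π => ∀ n, PFm.Sat M μ Φ (π.suffix n)
end

/-- The maximum of a set of truth values from `B4` (the least value `0000`
if the set is empty). -/
noncomputable def maxB4 (A : Set B4) : B4 :=
  if B4.t1111 ∈ A then .t1111
  else if B4.t0111 ∈ A then .t0111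
  else if B4.t0011 ∈ A then .t0011
  else if B4.t0001 ∈ A then .t0001
  else .t0000

mutual
/-- The rPCTL* evaluation function `V_M` on state formulas, relative to the
family of cylinder-set measures `μ s`. -/
noncomputable def SF.val {AP S : Type} [Fintype S] (M : DTMC AP S)
    (μ : ∀ s : S, MeasureTheory.Measure (M.Path s)) : SF AP → S → TV
  | .atom p, s => if p ∈ M.label s then TV.top else TV.bot
  | .not φ, s => if SF.val M μ φ s = TV.top then TV.bot else TV.top
  | .and φ ψ, s => (SF.val M μ φ s).inf (SF.val M μ ψ s)
  | .or φ ψ, s => (SF.val M μ φ s).sup (SF.val M μ ψ s)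
  | .imp φ ψ, s =>
      if SF.val M μ φ s ≤ SF.val M μ ψ s then TV.top else SF.val M μ ψ s
  | .prob c l Φ, s =>
      (maxB4 { b | c.holds (μ s { π | (PFm.val M μ Φ π.toU).ge4 b }) l.toENNReal }).toTV

/-- The rPCTL* evaluation function `V_M` on path formulas. -/
noncomputable def PFm.val {AP S : Type} [Fintype S] (M : DTMC AP S)
    (μ : ∀ s : S, MeasureTheory.Measure (M.Path s)) : PFm AP → M.PathU → TV
  | .state φ, π => SF.val M μ φ (π.1 0)
  | .not Φ, π => if PFm.val M μ Φ π = TV.top then TV.bot else TV.top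
  | .and Φ Ψ, π => (PFm.val M μ Φ π).inf (PFm.val M μ Ψ π)
  | .or Φ Ψ, π => (PFm.val M μ Φ π).sup (PFm.val M μ Ψ π)
  | .imp Φ Ψ, π =>
      if PFm.val M μ Φ π ≤ PFm.val M μ Ψ π then TV.top else PFm.val M μ Ψ π
  | .next Φ, π => PFm.val M μ Φ (π.suffix 1)
  | .ev Φ, π =>
      ⟨boolOf (∃ n, (PFm.val M μ Φ (π.suffix n)).b1 = true),
       boolOf (∃ n, (PFm.val M μ Φ (π.suffix n)).b2 = true),
       boolOf (∃ n, (PFm.val M μ Φ (π.suffix n)).b3 = true),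
       boolOf (∃ n, (PFm.val M μ Φ (π.suffix n)).b4 = true)⟩
  | .alw Φ, π =>
      ⟨boolOf (∀ n, (PFm.val M μ Φ (π.suffix n)).b1 = true),
       boolOf (∃ m, ∀ n, m ≤ n → (PFm.val M μ Φ (π.suffix n)).b2 = true),
       boolOf (∀ m, ∃ n, m ≤ n ∧ (PFm.val M μ Φ (π.suffix n)).b3 = true),
       boolOf (∃ n, (PFm.val M μ Φ (π.suffix n)).b4 = true)⟩
end

/-! ### Auxiliary lemmas -/

lemma boolOf_eq_true {P : Prop} : boolOf P = true ↔ P := by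
  simp [boolOf, decide_eq_true_iff]

lemma bool_le_iff {a b : Bool} : a ≤ b ↔ (a = true → b = true) := by
  cases a <;> cases b <;> simp

namespace TV

lemma le_def (v w : TV) : v ≤ w ↔ (v.b1 ≤ w.b1 ∧ v.b2 ≤ w.b2 ∧ v.b3 ≤ w.b3 ∧ v.b4 ≤ w.b4) :=
  Iff.rfl

lemma inB4_def (v : TV) : v.InB4 ↔ (v.b1 ≤ v.b2 ∧ v.b2 ≤ v.b3 ∧ v.b3 ≤ v.b4) := Iff.rfl

lemma inf_inB4 {v w : TV} (hv : v.InB4) (hw : w.InB4) : (v.inf w).InB4 := by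
  simp only [inB4_def, TV.inf, bool_le_iff, Bool.and_eq_true] at *
  tauto

lemma sup_inB4 {v w : TV} (hv : v.InB4) (hw : w.InB4) : (v.sup w).InB4 := by
  simp only [inB4_def, TV.sup, bool_le_iff, Bool.or_eq_true] at *
  tauto

lemma top_inB4 : TV.top.InB4 := by simp [inB4_def, TV.top]
lemma bot_inB4 : TV.bot.InB4 := by simp [inB4_def, TV.bot]

lemma eq_top_iff_b1 {v : TV} (hv : v.InB4) : v = TV.top ↔ v.b1 = true := by
  obtain ⟨h1, h2, h3⟩ := hv
  rw [bool_le_iff] at h1 h2 h3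
  obtain ⟨a, b, c, d⟩ := v
  constructor
  · intro h; rw [h]; rfl
  · intro h
    simp only at h h1 h2 h3
    simp_all [TV.top, TV.mk.injEq]

end TV

lemma B4_toTV_inB4 (t : B4) : (B4.toTV t).InB4 := by
  cases t <;> simp [TV.inB4_def, B4.toTV]

lemma maxB4_ge4_1 (A : Set B4) : ((maxB4 A).toTV).ge4 .t1111 ↔ B4.t1111 ∈ A := by
  unfold maxB4; split_ifs <;> simp_all [B4.toTV, TV.ge4]

lemma maxB4_ge4_2 (A : Set B4) :
    ((maxB4 A).toTV).ge4 .t0111 ↔ (B4.t1111 ∈ A ∨ B4.t0111 ∈ A) := by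
  unfold maxB4; split_ifs <;> simp_all [B4.toTV, TV.ge4]

lemma maxB4_ge4_3 (A : Set B4) :
    ((maxB4 A).toTV).ge4 .t0011 ↔ (B4.t1111 ∈ A ∨ B4.t0111 ∈ A ∨ B4.t0011 ∈ A) := by
  unfold maxB4; split_ifs <;> simp_all [B4.toTV, TV.ge4]

lemma maxB4_ge4_4 (A : Set B4) :
    ((maxB4 A).toTV).ge4 .t0001 ↔
      (B4.t1111 ∈ A ∨ B4.t0111 ∈ A ∨ B4.t0011 ∈ A ∨ B4.t0001 ∈ A) := by
  unfold maxB4; split_ifs <;> simp_all [B4.toTV, TV.ge4]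

lemma DTMC.PathU.suffix_suffix {AP S : Type} [Fintype S] {M : DTMC AP S}
    (π : M.PathU) (m n : ℕ) : (π.suffix m).suffix n = π.suffix (m + n) := by
  apply Subtype.ext
  funext i
  show π.1 (m + (n + i)) = π.1 (m + n + i)
  rw [Nat.add_assoc]
mutual
theorem SF.val_inB4 {AP S : Type} [Fintype S] (M : DTMC AP S)
    (μ : ∀ s : S, MeasureTheory.Measure (M.Path s)) :
    ∀ (φ : SF AP) (s : S), (SF.val M μ φ s).InB4
  | .atom p, s => by
      simp only [SF.val]
      split <;> first | exact TV.top_inB4 | exact TV.bot_inB4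
  | .not φ, s => by
      simp only [SF.val]
      split <;> first | exact TV.top_inB4 | exact TV.bot_inB4
  | .and φ ψ, s => by
      simp only [SF.val]
      exact TV.inf_inB4 (SF.val_inB4 M μ φ s) (SF.val_inB4 M μ ψ s)
  | .or φ ψ, s => by
      simp only [SF.val]
      exact TV.sup_inB4 (SF.val_inB4 M μ φ s) (SF.val_inB4 M μ ψ s)
  | .imp φ ψ, s => by
      simp only [SF.val]
      split
      · exact TV.top_inB4
      · exact SF.val_inB4 M μ ψ s
  | .prob c l Φ, s => by
      simp only [SF.val]
      exact B4_toTV_inB4 _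

theorem PFm.val_inB4 {AP S : Type} [Fintype S] (M : DTMC AP S)
    (μ : ∀ s : S, MeasureTheory.Measure (M.Path s)) :
    ∀ (Φ : PFm AP) (π : M.PathU), (PFm.val M μ Φ π).InB4
  | .state φ, π => by
      simp only [PFm.val]
      exact SF.val_inB4 M μ φ _
  | .not Φ, π => by
      simp only [PFm.val]
      split <;> first | exact TV.top_inB4 | exact TV.bot_inB4
  | .and Φ Ψ, π => by
      simp only [PFm.val]
      exact TV.inf_inB4 (PFm.val_inB4 M μ Φ π) (PFm.val_inB4 M μ Ψ π)
  | .or Φ Ψ, π => by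
      simp only [PFm.val]
      exact TV.sup_inB4 (PFm.val_inB4 M μ Φ π) (PFm.val_inB4 M μ Ψ π)
  | .imp Φ Ψ, π => by
      simp only [PFm.val]
      split
      · exact TV.top_inB4
      · exact PFm.val_inB4 M μ Ψ π
  | .next Φ, π => by
      simp only [PFm.val]
      exact PFm.val_inB4 M μ Φ _
  | .ev Φ, π => by
      have h : ∀ n, (PFm.val M μ Φ (π.suffix n)).InB4 := fun n => PFm.val_inB4 M μ Φ _
      simp only [PFm.val, TV.inB4_def, bool_le_iff, boolOf_eq_true]
      refine ⟨fun ⟨n, hn⟩ => ⟨n, ?_⟩, fun ⟨n, hn⟩ => ⟨n, ?_⟩, fun ⟨n, hn⟩ => ⟨n, ?_⟩⟩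
      · obtain ⟨h1, h2, h3⟩ := h n; exact bool_le_iff.mp h1 hn
      · obtain ⟨h1, h2, h3⟩ := h n; exact bool_le_iff.mp h2 hn
      · obtain ⟨h1, h2, h3⟩ := h n; exact bool_le_iff.mp h3 hn
  | .alw Φ, π => by
      have h : ∀ n, (PFm.val M μ Φ (π.suffix n)).InB4 := fun n => PFm.val_inB4 M μ Φ _
      simp only [PFm.val, TV.inB4_def, bool_le_iff, boolOf_eq_true]
      refine ⟨fun h1 => ⟨0, fun n _ => ?_⟩, fun ⟨m, hm⟩ m' => ?_, fun h3 => ?_⟩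
      · obtain ⟨g1, g2, g3⟩ := h n; exact bool_le_iff.mp g1 (h1 n)
      · refine ⟨max m m', le_max_right _ _, ?_⟩
        obtain ⟨g1, g2, g3⟩ := h (max m m')
        exact bool_le_iff.mp g2 (hm _ (le_max_left _ _))
      · obtain ⟨n, hn, hb⟩ := h3 0
        obtain ⟨g1, g2, g3⟩ := h n
        exact ⟨n, bool_le_iff.mp g3 hb⟩
end
mutual
/-- Translation of rPCTL* into PCTL*(◊,□) at truth level `t ≠ 0000`. -/
def SF.trB {AP : Type} : SF AP → B4 → SF AP
  | .atom p, _ => .atom p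
  | .not φ, _ => .not (φ.trB .t1111)
  | .and φ ψ, t => .and (φ.trB t) (ψ.trB t)
  | .or φ ψ, t => .or (φ.trB t) (ψ.trB t)
  | .imp φ ψ, t =>
      .or (.and (.imp (φ.trB .t1111) (ψ.trB .t1111))
           (.and (.imp (φ.trB .t0111) (ψ.trB .t0111))
            (.and (.imp (φ.trB .t0011) (ψ.trB .t0011))
                  (.imp (φ.trB .t0001) (ψ.trB .t0001)))))
          (ψ.trB t)
  | .prob c l Φ, t =>
      match t with
      | .t1111 => .prob c l (Φ.trB .t1111)
      | .t0111 => .or (.prob c l (Φ.trB .t1111)) (.prob c l (Φ.trB .t0111))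
      | .t0011 => .or (.prob c l (Φ.trB .t1111))
          (.or (.prob c l (Φ.trB .t0111)) (.prob c l (Φ.trB .t0011)))
      | _ => .or (.prob c l (Φ.trB .t1111))
          (.or (.prob c l (Φ.trB .t0111))
            (.or (.prob c l (Φ.trB .t0011)) (.prob c l (Φ.trB .t0001))))

/-- Translation of rPCTL* path formulas into PCTL*(◊,□) at truth level `t ≠ 0000`. -/
def PFm.trB {AP : Type} : PFm AP → B4 → PFm AP
  | .state φ, t => .state (φ.trB t)
  | .not Φ, _ => .not (Φ.trB .t1111)
  | .and Φ Ψ, t => .and (Φ.trB t) (Ψ.trB t)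
  | .or Φ Ψ, t => .or (Φ.trB t) (Ψ.trB t)
  | .imp Φ Ψ, t =>
      .or (.and (.imp (Φ.trB .t1111) (Ψ.trB .t1111))
           (.and (.imp (Φ.trB .t0111) (Ψ.trB .t0111))
            (.and (.imp (Φ.trB .t0011) (Ψ.trB .t0011))
                  (.imp (Φ.trB .t0001) (Ψ.trB .t0001)))))
          (Ψ.trB t)
  | .next Φ, t => .next (Φ.trB t)
  | .ev Φ, t => .ev (Φ.trB t)
  | .alw Φ, t =>
      match t with
      | .t1111 => .alw (Φ.trB .t1111)
      | .t0111 => .ev (.alw (Φ.trB .t0111))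
      | .t0011 => .alw (.ev (Φ.trB .t0011))
      | _ => .ev (Φ.trB .t0001)
end
lemma B4.ne1 : B4.t1111 ≠ B4.t0000 := fun h => B4.noConfusion h
lemma B4.ne2 : B4.t0111 ≠ B4.t0000 := fun h => B4.noConfusion h
lemma B4.ne3 : B4.t0011 ≠ B4.t0000 := fun h => B4.noConfusion h
lemma B4.ne4 : B4.t0001 ≠ B4.t0000 := fun h => B4.noConfusion h

namespace TV

lemma top_ge4 (t : B4) : TV.top.ge4 t := by
  cases t <;> simp [TV.ge4, TV.top]

lemma bot_not_ge4 {t : B4} (ht : t ≠ B4.t0000) : ¬ TV.bot.ge4 t := by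
  cases t
  case t0000 => exact absurd rfl ht
  all_goals simp [TV.ge4, TV.bot]

lemma inf_ge4 {v w : TV} {t : B4} (ht : t ≠ B4.t0000) :
    (v.inf w).ge4 t ↔ (v.ge4 t ∧ w.ge4 t) := by
  cases t
  case t0000 => exact absurd rfl ht
  all_goals simp [TV.ge4, TV.inf]

lemma sup_ge4 {v w : TV} {t : B4} (ht : t ≠ B4.t0000) :
    (v.sup w).ge4 t ↔ (v.ge4 t ∨ w.ge4 t) := by
  cases t
  case t0000 => exact absurd rfl ht
  all_goals simp [TV.ge4, TV.sup]

lemma le_iff_ge4 (v w : TV) : v ≤ w ↔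
    ((v.ge4 .t1111 → w.ge4 .t1111) ∧ (v.ge4 .t0111 → w.ge4 .t0111) ∧
     (v.ge4 .t0011 → w.ge4 .t0011) ∧ (v.ge4 .t0001 → w.ge4 .t0001)) := by
  simp [TV.le_def, bool_le_iff, TV.ge4]

lemma ge4_t1111_iff_eq_top {v : TV} (hv : v.InB4) : v.ge4 .t1111 ↔ v = TV.top := by
  rw [eq_top_iff_b1 hv]; exact Iff.rfl

end TV
mutual
theorem SF.trB_correct {AP S : Type} [Fintype S] (M : DTMC AP S)
    (μ : ∀ s : S, MeasureTheory.Measure (M.Path s)) :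
    ∀ (φ : SF AP) (t : B4), t ≠ B4.t0000 →
      ∀ s : S, ((SF.val M μ φ s).ge4 t ↔ SF.Sat M μ (φ.trB t) s)
  | .atom p, t, ht, s => by
      simp only [SF.val, SF.trB, SF.Sat]
      split <;> rename_i h
      · simp [h, TV.top_ge4]
      · simp [h, TV.bot_not_ge4 ht]
  | .not φ, t, ht, s => by
      have ihφ := SF.trB_correct M μ φ .t1111 B4.ne1 s
      have hB := SF.val_inB4 M μ φ s
      simp only [SF.val, SF.trB, SF.Sat]
      rw [← ihφ, TV.ge4_t1111_iff_eq_top hB]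
      by_cases h : SF.val M μ φ s = TV.top
      · simp [h, TV.bot_not_ge4 ht]
      · simp [h, TV.top_ge4]
  | .and φ ψ, t, ht, s => by
      simp only [SF.val, SF.trB, SF.Sat]
      rw [TV.inf_ge4 ht, SF.trB_correct M μ φ t ht s, SF.trB_correct M μ ψ t ht s]
  | .or φ ψ, t, ht, s => by
      simp only [SF.val, SF.trB, SF.Sat]
      rw [TV.sup_ge4 ht, SF.trB_correct M μ φ t ht s, SF.trB_correct M μ ψ t ht s]
  | .imp φ ψ, t, ht, s => by
      have i1 := fun u hu => SF.trB_correct M μ φ u hu s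
      have i2 := fun u hu => SF.trB_correct M μ ψ u hu s
      simp only [SF.val, SF.trB, SF.Sat]
      by_cases h : SF.val M μ φ s ≤ SF.val M μ ψ s
      · simp only [if_pos h]
        constructor
        · intro _
          rw [TV.le_iff_ge4] at h
          exact Or.inl ⟨fun hs => (i2 _ B4.ne1).mp (h.1 ((i1 _ B4.ne1).mpr hs)),
            fun hs => (i2 _ B4.ne2).mp (h.2.1 ((i1 _ B4.ne2).mpr hs)),
            fun hs => (i2 _ B4.ne3).mp (h.2.2.1 ((i1 _ B4.ne3).mpr hs)),
            fun hs => (i2 _ B4.ne4).mp (h.2.2.2 ((i1 _ B4.ne4).mpr hs))⟩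
        · intro _; exact TV.top_ge4 t
      · simp only [if_neg h]
        rw [i2 t ht]
        constructor
        · exact Or.inr
        · rintro (hle | hs)
          · exfalso; apply h
            rw [TV.le_iff_ge4]
            exact ⟨fun hv => (i2 _ B4.ne1).mpr (hle.1 ((i1 _ B4.ne1).mp hv)),
              fun hv => (i2 _ B4.ne2).mpr (hle.2.1 ((i1 _ B4.ne2).mp hv)),
              fun hv => (i2 _ B4.ne3).mpr (hle.2.2.1 ((i1 _ B4.ne3).mp hv)),
              fun hv => (i2 _ B4.ne4).mpr (hle.2.2.2 ((i1 _ B4.ne4).mp hv))⟩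
          · exact hs
  | .prob c l Φ, t, ht, s => by
      have hmem : ∀ u, u ≠ B4.t0000 →
          ((u ∈ {b : B4 | PCmp.holds c (μ s {π : M.Path s | (PFm.val M μ Φ π.toU).ge4 b}) l.toENNReal}) ↔
           SF.Sat M μ (.prob c l (Φ.trB u)) s) := by
        intro u hu
        have hset : {π : M.Path s | (PFm.val M μ Φ π.toU).ge4 u} =
            {π : M.Path s | PFm.Sat M μ (Φ.trB u) π.toU} :=
          Set.ext fun π => PFm.trB_correct M μ Φ u hu π.toU
        simp only [Set.mem_setOf_eq, SF.Sat, hset]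
      simp only [SF.val]
      cases t with
      | t0000 => exact absurd rfl ht
      | t1111 =>
          rw [maxB4_ge4_1, hmem _ B4.ne1]
          simp only [SF.trB]
      | t0111 =>
          rw [maxB4_ge4_2, hmem _ B4.ne1, hmem _ B4.ne2]
          simp only [SF.trB, SF.Sat]
      | t0011 =>
          rw [maxB4_ge4_3, hmem _ B4.ne1, hmem _ B4.ne2, hmem _ B4.ne3]
          simp only [SF.trB, SF.Sat]
      | t0001 =>
          rw [maxB4_ge4_4, hmem _ B4.ne1, hmem _ B4.ne2, hmem _ B4.ne3, hmem _ B4.ne4]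
          simp only [SF.trB, SF.Sat]

theorem PFm.trB_correct {AP S : Type} [Fintype S] (M : DTMC AP S)
    (μ : ∀ s : S, MeasureTheory.Measure (M.Path s)) :
    ∀ (Φ : PFm AP) (t : B4), t ≠ B4.t0000 →
      ∀ π : M.PathU, ((PFm.val M μ Φ π).ge4 t ↔ PFm.Sat M μ (Φ.trB t) π)
  | .state φ, t, ht, π => by
      simp only [PFm.val, PFm.trB, PFm.Sat]
      exact SF.trB_correct M μ φ t ht (π.1 0)
  | .not Φ, t, ht, π => by
      have ihΦ := PFm.trB_correct M μ Φ .t1111 B4.ne1 π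
      have hB := PFm.val_inB4 M μ Φ π
      simp only [PFm.val, PFm.trB, PFm.Sat]
      rw [← ihΦ, TV.ge4_t1111_iff_eq_top hB]
      by_cases h : PFm.val M μ Φ π = TV.top
      · simp [h, TV.bot_not_ge4 ht]
      · simp [h, TV.top_ge4]
  | .and Φ Ψ, t, ht, π => by
      simp only [PFm.val, PFm.trB, PFm.Sat]
      rw [TV.inf_ge4 ht, PFm.trB_correct M μ Φ t ht π, PFm.trB_correct M μ Ψ t ht π]
  | .or Φ Ψ, t, ht, π => by
      simp only [PFm.val, PFm.trB, PFm.Sat]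
      rw [TV.sup_ge4 ht, PFm.trB_correct M μ Φ t ht π, PFm.trB_correct M μ Ψ t ht π]
  | .imp Φ Ψ, t, ht, π => by
      have i1 := fun u hu => PFm.trB_correct M μ Φ u hu π
      have i2 := fun u hu => PFm.trB_correct M μ Ψ u hu π
      simp only [PFm.val, PFm.trB, PFm.Sat]
      by_cases h : PFm.val M μ Φ π ≤ PFm.val M μ Ψ π
      · simp only [if_pos h]
        constructor
        · intro _
          rw [TV.le_iff_ge4] at h
          exact Or.inl ⟨fun hs => (i2 _ B4.ne1).mp (h.1 ((i1 _ B4.ne1).mpr hs)),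
            fun hs => (i2 _ B4.ne2).mp (h.2.1 ((i1 _ B4.ne2).mpr hs)),
            fun hs => (i2 _ B4.ne3).mp (h.2.2.1 ((i1 _ B4.ne3).mpr hs)),
            fun hs => (i2 _ B4.ne4).mp (h.2.2.2 ((i1 _ B4.ne4).mpr hs))⟩
        · intro _; exact TV.top_ge4 t
      · simp only [if_neg h]
        rw [i2 t ht]
        constructor
        · exact Or.inr
        · rintro (hle | hs)
          · exfalso; apply h
            rw [TV.le_iff_ge4]
            exact ⟨fun hv => (i2 _ B4.ne1).mpr (hle.1 ((i1 _ B4.ne1).mp hv)),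
              fun hv => (i2 _ B4.ne2).mpr (hle.2.1 ((i1 _ B4.ne2).mp hv)),
              fun hv => (i2 _ B4.ne3).mpr (hle.2.2.1 ((i1 _ B4.ne3).mp hv)),
              fun hv => (i2 _ B4.ne4).mpr (hle.2.2.2 ((i1 _ B4.ne4).mp hv))⟩
          · exact hs
  | .next Φ, t, ht, π => by
      simp only [PFm.val, PFm.trB, PFm.Sat]
      exact PFm.trB_correct M μ Φ t ht (π.suffix 1)
  | .ev Φ, t, ht, π => by
      have ih := fun n => PFm.trB_correct M μ Φ t ht (π.suffix n)
      simp only [PFm.val, PFm.trB, PFm.Sat]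
      cases t with
      | t0000 => exact absurd rfl ht
      | t1111 =>
          simp only [TV.ge4] at ih ⊢
          simp only [boolOf_eq_true]
          exact exists_congr ih
      | t0111 =>
          simp only [TV.ge4] at ih ⊢
          simp only [boolOf_eq_true]
          exact exists_congr ih
      | t0011 =>
          simp only [TV.ge4] at ih ⊢
          simp only [boolOf_eq_true]
          exact exists_congr ih
      | t0001 =>
          simp only [TV.ge4] at ih ⊢
          simp only [boolOf_eq_true]
          exact exists_congr ih
  | .alw Φ, t, ht, π => by
      simp only [PFm.val, PFm.trB, PFm.Sat]
      cases t with
      | t0000 => exact absurd rfl ht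
      | t1111 =>
          have ih := fun n => PFm.trB_correct M μ Φ .t1111 B4.ne1 (π.suffix n)
          simp only [TV.ge4] at ih ⊢
          simp only [boolOf_eq_true, PFm.Sat]
          exact forall_congr' ih
      | t0111 =>
          have ih := fun n => PFm.trB_correct M μ Φ .t0111 B4.ne2 (π.suffix n)
          simp only [TV.ge4] at ih ⊢
          simp only [boolOf_eq_true, PFm.Sat, DTMC.PathU.suffix_suffix]
          constructor
          · rintro ⟨m, hm⟩
            exact ⟨m, fun k => (ih (m + k)).mp (hm (m + k) (Nat.le_add_right m k))⟩
          · rintro ⟨m, hm⟩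
            refine ⟨m, fun n hn => (ih n).mpr ?_⟩
            have := hm (n - m)
            rwa [Nat.add_sub_cancel' hn] at this
      | t0011 =>
          have ih := fun n => PFm.trB_correct M μ Φ .t0011 B4.ne3 (π.suffix n)
          simp only [TV.ge4] at ih ⊢
          simp only [boolOf_eq_true, PFm.Sat, DTMC.PathU.suffix_suffix]
          constructor
          · intro h m
            obtain ⟨n, hn, hb⟩ := h m
            refine ⟨n - m, ?_⟩
            rw [Nat.add_sub_cancel' hn]
            exact (ih n).mp hb
          · intro h m
            obtain ⟨k, hk⟩ := h m
            exact ⟨m + k, Nat.le_add_right m k, (ih (m + k)).mpr hk⟩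
      | t0001 =>
          have ih := fun n => PFm.trB_correct M μ Φ .t0001 B4.ne4 (π.suffix n)
          simp only [TV.ge4] at ih ⊢
          simp only [boolOf_eq_true, PFm.Sat]
          exact exists_congr ih
end
lemma TV.top_b1 : TV.top.b1 = true := rfl
lemma TV.bot_b1 : TV.bot.b1 = false := rfl

mutual
/-- Translation of PCTL*(◊,□) into rPCTL* (implication removal). -/
def SF.toR {AP : Type} : SF AP → SF AP
  | .atom p => .atom p
  | .not φ => .not φ.toR
  | .and φ ψ => .and φ.toR ψ.toR
  | .or φ ψ => .or φ.toR ψ.toR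
  | .imp φ ψ => .or (.not φ.toR) ψ.toR
  | .prob c l Φ => .prob c l Φ.toR

/-- Translation of PCTL*(◊,□) path formulas into rPCTL*. -/
def PFm.toR {AP : Type} : PFm AP → PFm AP
  | .state φ => .state φ.toR
  | .not Φ => .not Φ.toR
  | .and Φ Ψ => .and Φ.toR Ψ.toR
  | .or Φ Ψ => .or Φ.toR Ψ.toR
  | .imp Φ Ψ => .or (.not Φ.toR) Ψ.toR
  | .next Φ => .next Φ.toR
  | .ev Φ => .ev Φ.toR
  | .alw Φ => .alw Φ.toR
end

mutual
theorem SF.toR_correct {AP S : Type} [Fintype S] (M : DTMC AP S)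
    (μ : ∀ s : S, MeasureTheory.Measure (M.Path s)) :
    ∀ (φ : SF AP) (s : S), SF.Sat M μ φ s ↔ (SF.val M μ φ.toR s).b1 = true
  | .atom p, s => by
      simp only [SF.Sat, SF.toR, SF.val]
      split <;> rename_i h <;> simp [h, TV.top, TV.bot]
  | .not φ, s => by
      have ih := SF.toR_correct M μ φ s
      have hB := SF.val_inB4 M μ φ.toR s
      simp only [SF.Sat, SF.toR, SF.val]
      rw [ih, ← TV.eq_top_iff_b1 hB]
      by_cases h : SF.val M μ φ.toR s = TV.top
      · rw [if_pos h]; simp [h, TV.bot_b1]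
      · rw [if_neg h]; simp only [TV.top_b1]; simpa using h
  | .and φ ψ, s => by
      simp only [SF.Sat, SF.toR, SF.val]
      rw [SF.toR_correct M μ φ s, SF.toR_correct M μ ψ s]
      simp [TV.inf]
  | .or φ ψ, s => by
      simp only [SF.Sat, SF.toR, SF.val]
      rw [SF.toR_correct M μ φ s, SF.toR_correct M μ ψ s]
      simp [TV.sup]
  | .imp φ ψ, s => by
      have hB := SF.val_inB4 M μ φ.toR s
      simp only [SF.Sat, SF.toR, SF.val]
      rw [SF.toR_correct M μ φ s, SF.toR_correct M μ ψ s, ← TV.eq_top_iff_b1 hB]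
      by_cases h : SF.val M μ φ.toR s = TV.top
      · rw [if_pos h]; simp [h, TV.sup, TV.bot_b1]
      · rw [if_neg h]; simp [h, TV.sup, TV.top_b1]
  | .prob c l Φ, s => by
      have hset : {π : M.Path s | PFm.Sat M μ Φ π.toU} =
          {π : M.Path s | (PFm.val M μ Φ.toR π.toU).ge4 B4.t1111} :=
        Set.ext fun π => (PFm.toR_correct M μ Φ π.toU)
      simp only [SF.Sat, SF.toR, SF.val]
      rw [hset]
      have h := (maxB4_ge4_1
        {b : B4 | PCmp.holds c (μ s {π : M.Path s | (PFm.val M μ Φ.toR π.toU).ge4 b}) l.toENNReal}).symm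
      exact h

theorem PFm.toR_correct {AP S : Type} [Fintype S] (M : DTMC AP S)
    (μ : ∀ s : S, MeasureTheory.Measure (M.Path s)) :
    ∀ (Φ : PFm AP) (π : M.PathU),
      PFm.Sat M μ Φ π ↔ (PFm.val M μ Φ.toR π).b1 = true
  | .state φ, π => by
      simp only [PFm.Sat, PFm.toR, PFm.val]
      exact SF.toR_correct M μ φ (π.1 0)
  | .not Φ, π => by
      have ih := PFm.toR_correct M μ Φ π
      have hB := PFm.val_inB4 M μ Φ.toR π
      simp only [PFm.Sat, PFm.toR, PFm.val]
      rw [ih, ← TV.eq_top_iff_b1 hB]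
      by_cases h : PFm.val M μ Φ.toR π = TV.top
      · rw [if_pos h]; simp [h, TV.bot_b1]
      · rw [if_neg h]; simp only [TV.top_b1]; simpa using h
  | .and Φ Ψ, π => by
      simp only [PFm.Sat, PFm.toR, PFm.val]
      rw [PFm.toR_correct M μ Φ π, PFm.toR_correct M μ Ψ π]
      simp [TV.inf]
  | .or Φ Ψ, π => by
      simp only [PFm.Sat, PFm.toR, PFm.val]
      rw [PFm.toR_correct M μ Φ π, PFm.toR_correct M μ Ψ π]
      simp [TV.sup]
  | .imp Φ Ψ, π => by
      have hB := PFm.val_inB4 M μ Φ.toR π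
      simp only [PFm.Sat, PFm.toR, PFm.val]
      rw [PFm.toR_correct M μ Φ π, PFm.toR_correct M μ Ψ π, ← TV.eq_top_iff_b1 hB]
      by_cases h : PFm.val M μ Φ.toR π = TV.top
      · rw [if_pos h]; simp [h, TV.sup, TV.bot_b1]
      · rw [if_neg h]; simp [h, TV.sup, TV.top_b1]
  | .next Φ, π => by
      simp only [PFm.Sat, PFm.toR, PFm.val]
      exact PFm.toR_correct M μ Φ (π.suffix 1)
  | .ev Φ, π => by
      simp only [PFm.Sat, PFm.toR, PFm.val]
      simp only [boolOf_eq_true]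
      exact exists_congr fun n => PFm.toR_correct M μ Φ (π.suffix n)
  | .alw Φ, π => by
      simp only [PFm.Sat, PFm.toR, PFm.val]
      simp only [boolOf_eq_true]
      exact forall_congr' fun n => PFm.toR_correct M μ Φ (π.suffix n)
end
/-- rPCTL* is as expressive as PCTL*(◊,□):
(i) every PCTL*(◊,□) state formula `φ` has an rPCTL* state formula `φ'` with
`M,s ⊨ φ` iff `V_M(s, φ') = 1111`, and (ii) every rPCTL* state formula `φ` and
truth value `t ∈ B4` have a PCTL*(◊,□) state formula `φ_t` with
`V_M(s, φ) ⪰ t` iff `M,s ⊨ φ_t`. -/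
theorem rpctlstar_as_expressive_as_pctlstar {AP : Type} :
    (∀ φ : SF AP, ∃ φ' : SF AP,
      ∀ (S : Type) [Fintype S] (M : DTMC AP S)
        (μ : ∀ s : S, MeasureTheory.Measure (M.Path s)),
        (∀ s : S, M.IsCylinderMeasure s (μ s)) →
          ∀ s : S, SF.Sat M μ φ s ↔ SF.val M μ φ' s = TV.top) ∧
    (∀ (φ : SF AP) (t : B4), ∃ φt : SF AP,
      ∀ (S : Type) [Fintype S] (M : DTMC AP S)
        (μ : ∀ s : S, MeasureTheory.Measure (M.Path s)),
        (∀ s : S, M.IsCylinderMeasure s (μ s)) →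
          ∀ s : S, (SF.val M μ φ s).ge4 t ↔ SF.Sat M μ φt s) := by
  constructor
  · intro φ
    refine ⟨φ.toR, ?_⟩
    intro S _ M μ _ s
    rw [SF.toR_correct M μ φ s]
    exact (TV.eq_top_iff_b1 (SF.val_inB4 M μ φ.toR s)).symm
  · intro φ t
    cases t with
    | t0000 =>
        refine ⟨φ.imp φ, ?_⟩
        intro S _ M μ _ s
        simp [TV.ge4, SF.Sat]
    | t1111 =>
        exact ⟨φ.trB .t1111, fun S _ M μ _ s => SF.trB_correct M μ φ _ B4.ne1 s⟩
    | t0111 =>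
        exact ⟨φ.trB .t0111, fun S _ M μ _ s => SF.trB_correct M μ φ _ B4.ne2 s⟩
    | t0011 =>
        exact ⟨φ.trB .t0011, fun S _ M μ _ s => SF.trB_correct M μ φ _ B4.ne3 s⟩
    | t0001 =>
        exact ⟨φ.trB .t0001, fun S _ M μ _ s => SF.trB_correct M μ φ _ B4.ne4 s⟩
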